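/- arXiv:2001.08117 — 5 statements merged into one kernel-verified Lean document; each statement's English description precedes it below -/
import Mathlib

section
/- Let p be a prime, s ∈ ℤ_{≥1}, a ∈ ℤ_p ∖ ℤ_{≤0}, and c ∈ 1+pW. Then B_k ∈ W for every k ∈ ℤ_{≥0}; consequently Ĝ^{(σ)}_{a,…,a}(t) ∈ W[[t]] and ℱ̂^{(σ)}_{a,…,a}(t) ∈ W[[t]]. -/
/-!
Let `m = v_p(k + a)`. Since `k + a` is `p^m` times a unit, `B_k ∈ W` means that `p^m` divides
the numerator `A_k − (−1)^{se} A^{(1)}_{(k−l)/p} c^{(k+a)/p}`, and only `m ≥ 1`, i.e.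
`k ≡ l mod p`, needs an argument. Splitting off the factors divisible by `p` gives
`(a)_k = {a}_k p^{⌊k/p⌋} (a′)_{⌊k/p⌋}` and `k! = {1}_k p^{⌊k/p⌋} ⌊k/p⌋!`, hence
`{1}_k^s A_k = {a}_k^s A^{(1)}_{⌊k/p⌋}` with `{1}_k` a unit. As `a ≡ −k mod p^m`,
`{a}_k ≡ {−k}_k = (−1)^{k−⌊k/p⌋} {1}_k`, which yields Dwork's congruence
`A_k ≡ (−1)^{s(k−⌊k/p⌋)} A^{(1)}_{⌊k/p⌋} mod p^m`. This sign agrees with `(−1)^{se}` modulo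
`p^m` (for `p = 2` this needs `a mod 4`, whence `q = 4`), and `c^{(k+a)/p} ≡ 1 mod p^m` because
`p^{m−1} ∣ (k+a)/p`. Finally `F` has constant term `1`, so it is a unit of `W[[t]]` and
`Ĝ/F ∈ W[[t]]`.
-/

open scoped Classical

namespace HGP

/-- `𝔽̄_p`, an algebraic closure of the prime field `𝔽_p`. -/
abbrev Fbar (p : ℕ) [Fact p.Prime] : Type _ := AlgebraicClosure (ZMod p)

/-- `W = W(𝔽̄_p)`, the ring of Witt vectors of `𝔽̄_p`. -/
abbrev Wp (p : ℕ) [Fact p.Prime] : Type _ := WittVector p (Fbar p)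

/-- `K = Frac W`. -/
abbrev Kp (p : ℕ) [Fact p.Prime] : Type _ := FractionRing (Wp p)

/-- The canonical embedding `ℤ_p = W(𝔽_p) → W(𝔽̄_p)`. -/
noncomputable def iota (p : ℕ) [Fact p.Prime] : ℤ_[p] →+* Wp p :=
  (WittVector.map (algebraMap (ZMod p) (Fbar p))).comp (WittVector.equiv p).symm.toRingHom

/-- The canonical embedding `W → K`. -/
noncomputable def iotaK (p : ℕ) [Fact p.Prime] : Wp p →+* Kp p := algebraMap (Wp p) (Kp p)

/-- `l`: the unique integer in `{0,…,p−1}` with `a + l ≡ 0 mod p`. -/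
noncomputable def dl (p : ℕ) [Fact p.Prime] (a : ℤ_[p]) : ℕ := (-a).appr 1

/-- `q := 4` if `p = 2` and `q := p` otherwise. -/
def qq (p : ℕ) : ℕ := if p = 2 then 4 else p

/-- `l′`: the unique integer in `{0,…,q−1}` with `a + l′ ≡ 0 mod q`. -/
noncomputable def dl' (p : ℕ) [Fact p.Prime] (a : ℤ_[p]) : ℕ :=
  (-a).appr (if p = 2 then 2 else 1)

/-- `e := l′ − ⌊l′/p⌋`. -/
noncomputable def de (p : ℕ) [Fact p.Prime] (a : ℤ_[p]) : ℕ := dl' p a - dl' p a / p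

/-- `a ∈ ℤ_p ∖ ℤ_{≤0}`, i.e. `a` is not a nonpositive rational integer. -/
def NotNonposInt (p : ℕ) [Fact p.Prime] (a : ℤ_[p]) : Prop := ∀ n : ℕ, a + (n : ℤ_[p]) ≠ 0

/-- `a′` is the Dwork prime of `a`, i.e. `p·a′ = a + l`. -/
def IsDworkPrime (p : ℕ) [Fact p.Prime] (a a' : ℤ_[p]) : Prop :=
  (p : ℤ_[p]) * a' = a + (dl p a : ℤ_[p])

/-- `A k = ((a)_k / k!)^s ∈ ℤ_p`, characterized by `k!^s · A k = ((a)_k)^s`. -/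
def IsHGCoeff (p : ℕ) [Fact p.Prime] (s : ℕ) (a : ℤ_[p]) (A : ℕ → ℤ_[p]) : Prop :=
  ∀ k : ℕ, (k.factorial : ℤ_[p]) ^ s * A k = ((ascPochhammer ℤ_[p] k).eval a) ^ s

/-- `f = (α ↦ c^α)` for `c ∈ 1 + pW`: `c^α` is uniquely characterized by
`c^α ≡ c^{α_n} mod p^n W` for any natural approximation `α_n` of `α` mod `p^n`. -/
def IsCpow (p : ℕ) [Fact p.Prime] (c : Wp p) (f : ℤ_[p] → Wp p) : Prop :=
  ∀ (α : ℤ_[p]) (n : ℕ), f α - c ^ (α.appr n) ∈ Ideal.span {(p : Wp p) ^ n}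

/-- The coefficients `B_k` of `Ĝ^{(σ)}_{a,…,a}(t)`, as elements of `K = Frac W`:
`B_k = (k+a)⁻¹ (A_k − (−1)^{se} A^{(1)}_{(k−l)/p} c^{(k−l)/p + a′})`. -/
noncomputable def BhatK (p : ℕ) [Fact p.Prime] (s : ℕ) (a a' : ℤ_[p]) (A A1 : ℕ → ℤ_[p])
    (cpw : ℤ_[p] → Wp p) (k : ℕ) : Kp p :=
  ((k : Kp p) + iotaK p (iota p a))⁻¹ *
    (iotaK p (iota p (A k)) -
      (if dl p a ≤ k ∧ p ∣ (k - dl p a) then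
        (-1 : Kp p) ^ (s * de p a) * iotaK p (iota p (A1 ((k - dl p a) / p))) *
          iotaK p (cpw ((((k - dl p a) / p : ℕ) : ℤ_[p]) + a'))
      else 0))

/-- `B : ℕ → W` is the coefficient function of `Ĝ^{(σ)}_{a,…,a}(t)`, characterized in `W` by
`(k+a)·B_k = A_k − (−1)^{se} A^{(1)}_{(k−l)/p} c^{(k−l)/p + a′}`. -/
def IsBhat (p : ℕ) [Fact p.Prime] (s : ℕ) (a a' : ℤ_[p]) (A A1 : ℕ → ℤ_[p])
    (cpw : ℤ_[p] → Wp p) (B : ℕ → Wp p) : Prop :=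
  ∀ k : ℕ, ((k : Wp p) + iota p a) * B k =
    iota p (A k) -
      (if dl p a ≤ k ∧ p ∣ (k - dl p a) then
        (-1 : Wp p) ^ (s * de p a) * iota p (A1 ((k - dl p a) / p)) *
          cpw ((((k - dl p a) / p : ℕ) : ℤ_[p]) + a')
      else 0)

/-- A function `ℕ → K` is Lipschitz: it takes values in `W` and
`p^m ∣ (n − n′)` implies `f n − f n′ ∈ p^m W`. -/
def LipschitzSeq (p : ℕ) [Fact p.Prime] (f : ℕ → Kp p) : Prop :=
  (∀ n : ℕ, f n ∈ (iotaK p).range) ∧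
    ∀ n n' m : ℕ, ((p : ℤ) ^ m ∣ (n : ℤ) - (n' : ℤ)) →
      ∃ w : Wp p, f n - f n' = (p : Kp p) ^ m * iotaK p w

/-- `L` is the `p`-adic limit of the sequence `s` in `W`. -/
def WLim (p : ℕ) [Fact p.Prime] (s : ℕ → Wp p) (L : Wp p) : Prop :=
  ∀ m : ℕ, ∃ M : ℕ, ∀ n ≥ M, L - s n ∈ Ideal.span {(p : Wp p) ^ m}

/-- `{α}_k := Π_{1 ≤ i ≤ k, p ∤ (α+i−1)} (α+i−1)`. -/
noncomputable def curly (p : ℕ) [Fact p.Prime] (α : ℤ_[p]) (k : ℕ) : ℤ_[p] :=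
  ∏ j ∈ Finset.range k, if (p : ℤ_[p]) ∣ (α + (j : ℤ_[p])) then 1 else (α + (j : ℤ_[p]))

/-- `W/p^n W`. -/
abbrev Qn (p : ℕ) [Fact p.Prime] (n : ℕ) := Wp p ⧸ Ideal.span {(p : Wp p) ^ n}

/-- Laurent polynomials over `W/p^n`, obtained from polynomials over `W`. -/
noncomputable def laurentOfPolyW (p : ℕ) [Fact p.Prime] (n : ℕ) :
    Polynomial (Wp p) →+* LaurentPolynomial (Qn p n) :=
  (Polynomial.toLaurent).comp
    (Polynomial.mapRingHom (Ideal.Quotient.mk (Ideal.span {(p : Wp p) ^ n})))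

/-- `R_n := (W/p^n)[t,t⁻¹, h(t)⁻¹]`, the localization of the Laurent polynomial ring
over `W/p^n` away from (the image of) `h`. -/
abbrev Rn (p : ℕ) [Fact p.Prime] (h : Polynomial (Wp p)) (n : ℕ) :=
  Localization.Away (laurentOfPolyW p n h)

/-- The canonical map from Laurent polynomials over `W/p^n` to `R_n`. -/
noncomputable def mkRn (p : ℕ) [Fact p.Prime] (h : Polynomial (Wp p)) (n : ℕ) :
    LaurentPolynomial (Qn p n) →+* Rn p h n := algebraMap _ _

/-- The canonical map from polynomials over `W` to `R_n`. -/
noncomputable def toRn (p : ℕ) [Fact p.Prime] (h : Polynomial (Wp p)) (n : ℕ) :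
    Polynomial (Wp p) →+* Rn p h n := (mkRn p h n).comp (laurentOfPolyW p n)

end HGP

theorem Nat.dvd_add_sub_iff_mod_eq {n k l : ℕ} (hl : l < n) : n ∣ k + (n - l) ↔ k % n = l := by
  rw [← Int.natCast_dvd_natCast, Nat.cast_add, Nat.cast_sub hl.le,
    show (k : ℤ) + (n - l) = k - l + n by ring, dvd_add_self_right, ← Nat.modEq_iff_dvd,
    Nat.ModEq, Nat.mod_eq_of_lt hl, eq_comm]

theorem Nat.add_sub_one_sub_div_of_mod_eq {n k l : ℕ} (hn : 0 < n) (h : k % n = l) :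
    (k + (n - 1 - l)) / n = k / n := by
  have := Nat.div_add_mod k n
  have := Nat.mod_lt k hn
  rw [show k + (n - 1 - l) = n * (k / n) + (n - 1) by omega, Nat.mul_add_div hn,
    Nat.div_eq_of_lt (show n - 1 < n by omega), add_zero]

theorem two_dvd_neg_one_pow_sub_neg_one_pow {R : Type*} [CommRing R] (x y : ℕ) :
    (2 : R) ∣ (-1) ^ x - (-1) ^ y := by
  have h : ∀ n : ℕ, (2 : R) ∣ (-1) ^ n - 1 := fun n => by
    simpa using (Dvd.intro_left (-1) (by ring) : (2 : R) ∣ -1 - 1).trans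
      (sub_dvd_pow_sub_pow (-1 : R) 1 n)
  simpa using dvd_sub (h x) (h y)

namespace PadicInt

variable {p : ℕ} [Fact p.Prime]

theorem natCast_pow_dvd_natCast_iff {m n : ℕ} : (p : ℤ_[p]) ^ m ∣ (n : ℤ_[p]) ↔ p ^ m ∣ n := by
  have h := pow_p_dvd_int_iff (p := p) m n
  rw [Int.cast_natCast] at h
  rw [h]
  exact_mod_cast Int.natCast_dvd_natCast

theorem natCast_dvd_natCast_iff {n : ℕ} : (p : ℤ_[p]) ∣ (n : ℤ_[p]) ↔ p ∣ n := by
  simpa using natCast_pow_dvd_natCast_iff (p := p) (m := 1) (n := n)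

theorem pow_dvd_add_natCast_iff {α : ℤ_[p]} {m l : ℕ} (hl : l < p ^ m)
    (hα : (p : ℤ_[p]) ^ m ∣ α + l) (k : ℕ) :
    (p : ℤ_[p]) ^ m ∣ α + k ↔ k % p ^ m = l := by
  have hsplit : α + k = (α + l) + (((k : ℤ) - l : ℤ) : ℤ_[p]) := by push_cast; ring
  rw [hsplit, dvd_add_right hα, pow_p_dvd_int_iff, ← Nat.cast_pow, ← Nat.modEq_iff_dvd,
    Nat.ModEq, Nat.mod_eq_of_lt hl, eq_comm]

theorem pow_dvd_add_appr_neg (a : ℤ_[p]) (n : ℕ) : (p : ℤ_[p]) ^ n ∣ a + (-a).appr n := by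
  have h := Ideal.mem_span_singleton.1 (appr_spec n (-a))
  rw [← dvd_neg]
  convert h using 1
  ring

theorem isUnit_of_not_dvd {x : ℤ_[p]} (h : ¬(p : ℤ_[p]) ∣ x) : IsUnit x := by
  by_contra hx
  rw [← mem_nonunits_iff, ← IsLocalRing.mem_maximalIdeal, maximalIdeal_eq_span_p,
    Ideal.mem_span_singleton] at hx
  exact h hx

end PadicInt

namespace PowerSeries

theorem coeff_mul_inv_mem {K : Type*} [Field K] (S : Subring K) {f g : K⟦X⟧}
    (hf : ∀ n, coeff n f ∈ S) (hg : ∀ n, coeff n g ∈ S) (hg0 : constantCoeff g = 1) (n : ℕ) :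
    coeff n (f * g⁻¹) ∈ S := by
  have hlift : ∀ φ : K⟦X⟧, (∀ n, coeff n φ ∈ S) → ∃ ψ : S⟦X⟧, map S.subtype ψ = φ :=
    fun φ hφ => ⟨mk fun n => ⟨coeff n φ, hφ n⟩, by ext n; simp [coeff_map]⟩
  obtain ⟨f, rfl⟩ := hlift f hf
  obtain ⟨g, rfl⟩ := hlift g hg
  have hg0' : constantCoeff g = 1 :=
    S.subtype_injective (by rwa [← coeff_zero_eq_constantCoeff_apply, ← coeff_map,
      coeff_zero_eq_constantCoeff_apply, map_one])
  obtain ⟨h, hgh⟩ := (isUnit_iff_constantCoeff.2 (hg0' ▸ isUnit_one)).exists_right_inv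
  have hinv : (map S.subtype g)⁻¹ = map S.subtype h := by
    refine ((eq_inv_iff_mul_eq_one (by rw [hg0]; exact one_ne_zero)).2 ?_).symm
    rw [← map_mul, mul_comm, hgh, map_one]
  rw [hinv, ← map_mul, coeff_map]
  exact (coeff n (f * h)).2

end PowerSeries

namespace HGP

section Curly

open Finset

variable {p : ℕ} [Fact p.Prime]

theorem curly_succ (α : ℤ_[p]) (k : ℕ) :
    curly p α (k + 1) =
      curly p α k * if (p : ℤ_[p]) ∣ α + k then 1 else α + k :=
  prod_range_succ _ _

theorem isUnit_curly (α : ℤ_[p]) (k : ℕ) : IsUnit (curly p α k) := by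
  refine IsUnit.prod_iff.2 fun j _ => ?_
  split_ifs with h
  exacts [isUnit_one, PadicInt.isUnit_of_not_dvd h]

/-- The factors of `(α)_k` divisible by `p` are `p (β + i)` for `i < ⌈(k - l)/p⌉`. -/
theorem ascPochhammer_eval_eq_curly_mul {α β : ℤ_[p]} {l : ℕ} (hl : l < p)
    (hβ : (p : ℤ_[p]) * β = α + l) (k : ℕ) :
    (ascPochhammer ℤ_[p] k).eval α =
      curly p α k * (p : ℤ_[p]) ^ ((k + (p - 1 - l)) / p) *
        (ascPochhammer ℤ_[p] ((k + (p - 1 - l)) / p)).eval β := by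
  induction k with
  | zero => simp [curly, Nat.div_eq_of_lt (show p - 1 - l < p by omega)]
  | succ k ih =>
    have hdvd : (p : ℤ_[p]) ∣ α + k ↔ k % p = l := by
      simpa using PadicInt.pow_dvd_add_natCast_iff (m := 1) (by simpa using hl)
        (by simpa using Dvd.intro β hβ) k
    have hsucc : (k + 1 + (p - 1 - l)) / p =
        (k + (p - 1 - l)) / p + if k % p = l then 1 else 0 := by
      rw [show k + 1 + (p - 1 - l) = k + (p - 1 - l) + 1 by omega, Nat.succ_div]
      simp only [show k + (p - 1 - l) + 1 = k + (p - l) by omega, Nat.dvd_add_sub_iff_mod_eq hl]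
    rw [ascPochhammer_succ_eval, ih, curly_succ, hsucc]
    by_cases hk : k % p = l
    · have hαk : α + k = p * (β + ((k + (p - 1 - l)) / p : ℕ)) := by
        rw [Nat.add_sub_one_sub_div_of_mod_eq (by omega) hk, mul_add, hβ]
        nth_rw 1 [← Nat.div_add_mod k p, hk]
        push_cast
        ring
      rw [if_pos (hdvd.2 hk), if_pos hk, hαk, ascPochhammer_succ_eval]
      ring
    · rw [if_neg (mt hdvd.1 hk), if_neg hk, add_zero]
      ring

theorem factorial_eq_curly_mul (k : ℕ) :
    (k.factorial : ℤ_[p]) = curly p 1 k * (p : ℤ_[p]) ^ (k / p) * ((k / p).factorial : ℤ_[p]) := by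
  have hp := (Fact.out : p.Prime).one_le
  have h := ascPochhammer_eval_eq_curly_mul (p := p) (α := 1) (β := 1) (l := p - 1)
    (by omega) (by push_cast [hp]; ring) k
  simpa only [ascPochhammer_eval_one, Nat.sub_self, add_zero] using h

theorem pow_dvd_curly_sub_curly {α β : ℤ_[p]} {m : ℕ} (hm : m ≠ 0)
    (h : (p : ℤ_[p]) ^ m ∣ α - β) (k : ℕ) : (p : ℤ_[p]) ^ m ∣ curly p α k - curly p β k := by
  have hp : (p : ℤ_[p]) ∣ α - β := (dvd_pow_self _ hm).trans h
  rw [← Ideal.mem_span_singleton, ← Ideal.Quotient.eq, curly, curly, map_prod, map_prod]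
  refine prod_congr rfl fun j _ => ?_
  have hiff : (p : ℤ_[p]) ∣ α + j ↔ (p : ℤ_[p]) ∣ β + j := by
    rw [show α + j = (α - β) + (β + j) by ring, dvd_add_right hp]
  split_ifs with hα hβ hβ
  · rfl
  · exact absurd (hiff.1 hα) hβ
  · exact absurd (hiff.2 hβ) hα
  · rw [Ideal.Quotient.eq, Ideal.mem_span_singleton, add_sub_add_right_eq_sub]
    exact h

/-- Reflecting `j ↦ k - 1 - j` turns the factors `j - k` of `{-k}_k` into `-(1 + j)`; exactly
`k - ⌊k/p⌋` of them are not divisible by `p`. -/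
theorem curly_neg_natCast (k : ℕ) :
    curly p (-k) k = (-1) ^ (k - k / p) * curly p 1 k := by
  have hterm : ∀ j ∈ range k,
      (if (p : ℤ_[p]) ∣ -k + ((k - 1 - j : ℕ) : ℤ_[p]) then 1 else -k + ((k - 1 - j : ℕ) : ℤ_[p])) =
        (if (p : ℤ_[p]) ∣ 1 + (j : ℤ_[p]) then 1 else -1) *
          (if (p : ℤ_[p]) ∣ 1 + (j : ℤ_[p]) then 1 else 1 + (j : ℤ_[p])) := by
    intro j hj
    have hcast : -(k : ℤ_[p]) + ((k - 1 - j : ℕ) : ℤ_[p]) = -(1 + j) := by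
      rw [Nat.cast_sub (by simp at hj; omega), Nat.cast_sub (by simp at hj; omega)]
      ring
    rw [hcast, dvd_neg]
    split_ifs <;> ring
  have hcard : #((range k).filter fun j : ℕ => ¬(p : ℤ_[p]) ∣ 1 + j) = k - k / p := by
    have hmult : #((range k).filter fun j : ℕ => (p : ℤ_[p]) ∣ 1 + j) = k / p := by
      rw [← Nat.card_multiples]
      congr! 2 with j
      rw [add_comm, ← Nat.cast_succ, PadicInt.natCast_dvd_natCast_iff]
    have := card_filter_add_card_filter_not (s := range k)
      (fun j : ℕ => (p : ℤ_[p]) ∣ 1 + (j : ℤ_[p]))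
    rw [card_range] at this
    omega
  rw [curly, ← prod_range_reflect, prod_congr rfl hterm, prod_mul_distrib, prod_ite,
    prod_const_one, prod_const, one_mul, hcard, curly]

end Curly

section Dwork

variable {p : ℕ} [Fact p.Prime] {s : ℕ} {a a' : ℤ_[p]} {A A1 : ℕ → ℤ_[p]}

theorem dl_lt (a : ℤ_[p]) : dl p a < p := by
  simpa [dl] using PadicInt.appr_lt (-a) 1

theorem dvd_add_dl (a : ℤ_[p]) : (p : ℤ_[p]) ∣ a + dl p a := by
  simpa [dl] using PadicInt.pow_dvd_add_appr_neg a 1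

theorem mod_eq_dl_of_dvd {k : ℕ} (h : (p : ℤ_[p]) ∣ k + a) : k % p = dl p a := by
  have := PadicInt.pow_dvd_add_natCast_iff (m := 1) (by simpa using dl_lt a)
    (by simpa using dvd_add_dl a) k
  simpa using this.1 (by simpa [add_comm] using h)

theorem de_eq_dl (hp2 : p ≠ 2) (a : ℤ_[p]) : de p a = dl p a := by
  simp [de, dl', dl, hp2, Nat.div_eq_of_lt (by simpa using PadicInt.appr_lt (-a) 1)]

/-- For `p = 2` the sign `(-1)^e` depends on `a mod 4`, which `k` only sees when `4 ∣ k + a`;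
modulo `2` all signs agree. -/
theorem pow_dvd_neg_one_pow_sub_neg_one_pow_de {k m : ℕ} (hm : m ≠ 0)
    (h : (p : ℤ_[p]) ^ m ∣ k + a) :
    (p : ℤ_[p]) ^ m ∣ (-1) ^ (k - k / p) - (-1) ^ de p a := by
  obtain rfl | hp2 := eq_or_ne p 2
  · obtain rfl | hm2 := (show m = 1 ∨ 2 ≤ m by omega)
    · simpa using two_dvd_neg_one_pow_sub_neg_one_pow (R := ℤ_[2]) (k - k / 2) (de 2 a)
    · have hk : k % 4 = dl' 2 a := by
        have := PadicInt.pow_dvd_add_natCast_iff (m := 2) (PadicInt.appr_lt (-a) 2)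
          (PadicInt.pow_dvd_add_appr_neg a 2) k
        simpa [dl'] using this.1 (by rw [add_comm]; exact (pow_dvd_pow _ hm2).trans h)
      rw [show k - k / 2 = 2 * (k / 4) + de 2 a by unfold de; omega, pow_add, pow_mul,
        neg_one_sq, one_pow, one_mul, sub_self]
      exact dvd_zero _
  · have hk := mod_eq_dl_of_dvd ((dvd_pow_self _ hm).trans h)
    have hsub : (p - 1) * (k / p) = p * (k / p) - k / p := Nat.sub_one_mul p (k / p)
    have hle : k / p ≤ p * (k / p) := Nat.le_mul_of_pos_left _ (Fact.out : p.Prime).pos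
    have hdiv := Nat.div_add_mod k p
    rw [de_eq_dl hp2, show k - k / p = (p - 1) * (k / p) + dl p a by omega, pow_add, pow_mul,
      ((Fact.out : p.Prime).even_sub_one hp2).neg_one_pow, one_pow, one_mul, sub_self]
    exact dvd_zero _

theorem IsHGCoeff.apply_zero (hA : IsHGCoeff p s a A) : A 0 = 1 := by
  simpa using hA 0

theorem IsHGCoeff.curly_pow_mul_eq (hA : IsHGCoeff p s a A) (hA1 : IsHGCoeff p s a' A1)
    (ha' : IsDworkPrime p a a') {k : ℕ} (hk : k % p = dl p a) :
    curly p 1 k ^ s * A k = curly p a k ^ s * A1 (k / p) := by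
  have hp := (Fact.out : p.Prime).pos
  have hpoch := ascPochhammer_eval_eq_curly_mul (dl_lt a) ha' k
  rw [Nat.add_sub_one_sub_div_of_mod_eq hp hk] at hpoch
  have hk! := hA k
  rw [hpoch, factorial_eq_curly_mul] at hk!
  have hne : ((p : ℤ_[p]) ^ (k / p) * ((k / p).factorial : ℤ_[p])) ^ s ≠ 0 :=
    pow_ne_zero _ (mul_ne_zero (pow_ne_zero _ (by exact_mod_cast hp.ne'))
      (by exact_mod_cast (k / p).factorial_ne_zero))
  refine mul_right_cancel₀ hne ?_
  linear_combination hk! - (curly p a k ^ s * ((p : ℤ_[p]) ^ (k / p)) ^ s) * hA1 (k / p)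

theorem IsHGCoeff.pow_dvd_sub_neg_one_pow_mul (hA : IsHGCoeff p s a A)
    (hA1 : IsHGCoeff p s a' A1) (ha' : IsDworkPrime p a a') {k m : ℕ} (hm : m ≠ 0)
    (h : (p : ℤ_[p]) ^ m ∣ k + a) :
    (p : ℤ_[p]) ^ m ∣ A k - ((-1) ^ (k - k / p)) ^ s * A1 (k / p) := by
  have hcurly : (p : ℤ_[p]) ^ m ∣ curly p a k - (-1) ^ (k - k / p) * curly p 1 k := by
    rw [← curly_neg_natCast]
    exact pow_dvd_curly_sub_curly hm (by rwa [sub_neg_eq_add, add_comm]) k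
  have hpow := (hcurly.trans (sub_dvd_pow_sub_pow _ _ s)).mul_right (A1 (k / p))
  have key := hA.curly_pow_mul_eq hA1 ha' (mod_eq_dl_of_dvd ((dvd_pow_self _ hm).trans h))
  rw [show (curly p a k ^ s - ((-1) ^ (k - k / p) * curly p 1 k) ^ s) * A1 (k / p) =
      curly p 1 k ^ s * (A k - ((-1) ^ (k - k / p)) ^ s * A1 (k / p)) by
    linear_combination -key] at hpow
  exact ((isUnit_curly 1 k).pow s).dvd_mul_left.1 hpow

end Dwork

theorem IsCpow.pow_succ_dvd_sub_one {p : ℕ} [Fact p.Prime] {c : Wp p} {cpw : ℤ_[p] → Wp p}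
    (hcpw : IsCpow p c cpw) (hc : (p : Wp p) ∣ c - 1) {α : ℤ_[p]} {m : ℕ}
    (hα : (p : ℤ_[p]) ^ m ∣ α) : (p : Wp p) ^ (m + 1) ∣ cpw α - 1 := by
  obtain ⟨j, hj⟩ : p ^ m ∣ α.appr (m + 1) := by
    rw [← PadicInt.natCast_pow_dvd_natCast_iff]
    have happr := Ideal.mem_span_singleton.1 (PadicInt.appr_spec (m + 1) α)
    simpa using dvd_sub hα ((pow_dvd_pow _ m.le_succ).trans happr)
  have hcpow : (p : Wp p) ^ (m + 1) ∣ c ^ α.appr (m + 1) - 1 := by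
    have hfrob : (p : Wp p) ^ (m + 1) ∣ c ^ p ^ m - 1 := by
      simpa using dvd_sub_pow_of_dvd_sub hc m
    rw [hj, pow_mul]
    simpa using hfrob.trans (sub_dvd_pow_sub_pow (c ^ p ^ m) 1 j)
  simpa using dvd_add (Ideal.mem_span_singleton.1 (hcpw α (m + 1))) hcpow

theorem iota_injective (p : ℕ) [Fact p.Prime] : Function.Injective (iota p) :=
  (WittVector.map_injective _ (algebraMap (ZMod p) (Fbar p)).injective).comp
    (WittVector.equiv p).symm.injective

theorem iotaK_injective (p : ℕ) [Fact p.Prime] : Function.Injective (iotaK p) :=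
  IsFractionRing.injective (Wp p) (Kp p)

noncomputable def bhatNumerator (p : ℕ) [Fact p.Prime] (s : ℕ) (a a' : ℤ_[p])
    (A A1 : ℕ → ℤ_[p]) (cpw : ℤ_[p] → Wp p) (k : ℕ) : Wp p :=
  iota p (A k) -
    if dl p a ≤ k ∧ p ∣ (k - dl p a) then
      (-1 : Wp p) ^ (s * de p a) * iota p (A1 ((k - dl p a) / p)) *
        cpw ((((k - dl p a) / p : ℕ) : ℤ_[p]) + a')
    else 0

section Bhat

variable {p : ℕ} [Fact p.Prime] {s : ℕ} {a a' : ℤ_[p]} {A A1 : ℕ → ℤ_[p]} {c : Wp p}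
  {cpw : ℤ_[p] → Wp p}

theorem BhatK_eq (k : ℕ) :
    BhatK p s a a' A A1 cpw k =
      (iotaK p (iota p (k + a)))⁻¹ * iotaK p (bhatNumerator p s a a' A A1 cpw k) := by
  rw [BhatK, bhatNumerator, map_add, map_add, map_natCast, map_natCast, map_sub,
    apply_ite (iotaK p), map_mul, map_mul, map_pow, map_neg, map_one, map_zero]

theorem pow_succ_dvd_bhatNumerator (ha' : IsDworkPrime p a a') (hA : IsHGCoeff p s a A)
    (hA1 : IsHGCoeff p s a' A1) (hc : (p : Wp p) ∣ c - 1) (hcpw : IsCpow p c cpw) {k m : ℕ}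
    (h : (p : ℤ_[p]) ^ (m + 1) ∣ k + a) :
    (p : Wp p) ^ (m + 1) ∣ bhatNumerator p s a a' A A1 cpw k := by
  have hk : k % p = dl p a := mod_eq_dl_of_dvd ((dvd_pow_self _ m.succ_ne_zero).trans h)
  have hdiv := Nat.div_add_mod k p
  have hkl : k - dl p a = p * (k / p) := by omega
  have hq : (k - dl p a) / p = k / p := by
    rw [hkl, Nat.mul_div_cancel_left _ (Fact.out : p.Prime).pos]
  have hdwork : (p : ℤ_[p]) ^ (m + 1) ∣ A k - (-1) ^ (s * de p a) * A1 (k / p) := by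
    have hsign := ((pow_dvd_neg_one_pow_sub_neg_one_pow_de m.succ_ne_zero h).trans
      (sub_dvd_pow_sub_pow _ _ s)).mul_right (A1 (k / p))
    rw [pow_mul']
    convert dvd_add (hA.pow_dvd_sub_neg_one_pow_mul hA1 ha' m.succ_ne_zero h) hsign using 1
    ring
  have hα : (p : ℤ_[p]) ^ m ∣ ((k / p : ℕ) : ℤ_[p]) + a' := by
    have hp : (p : ℤ_[p]) * (((k / p : ℕ) : ℤ_[p]) + a') = k + a := by
      rw [mul_add, ha', ← hk]
      nth_rw 3 [← hdiv]
      push_cast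
      ring
    rwa [← hp, pow_succ', mul_dvd_mul_iff_left (by exact_mod_cast (Fact.out : p.Prime).ne_zero)]
      at h
  rw [bhatNumerator, if_pos ⟨by omega, k / p, hkl⟩, hq]
  rw [show iota p (A k) - (-1) ^ (s * de p a) * iota p (A1 (k / p)) * cpw ((k / p : ℕ) + a') =
      iota p (A k - (-1) ^ (s * de p a) * A1 (k / p)) -
        (-1) ^ (s * de p a) * iota p (A1 (k / p)) * (cpw ((k / p : ℕ) + a') - 1) by
    simp only [map_sub, map_mul, map_pow, map_neg, map_one]
    ring]
  exact dvd_sub (by simpa using map_dvd (iota p) hdwork)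
    ((hcpw.pow_succ_dvd_sub_one hc hα).mul_left _)

theorem iota_natCast_add_dvd_bhatNumerator (ha : NotNonposInt p a) (ha' : IsDworkPrime p a a')
    (hA : IsHGCoeff p s a A) (hA1 : IsHGCoeff p s a' A1) (hc : (p : Wp p) ∣ c - 1)
    (hcpw : IsCpow p c cpw) (k : ℕ) :
    iota p (k + a) ∣ bhatNumerator p s a a' A A1 cpw k := by
  have hx : (k : ℤ_[p]) + a ≠ 0 := by simpa [add_comm] using ha k
  have hspec := PadicInt.unitCoeff_spec hx
  rw [hspec, map_mul, ((PadicInt.unitCoeff hx).isUnit.map (iota p)).mul_left_dvd, map_pow,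
    map_natCast]
  generalize ((k : ℤ_[p]) + a).valuation = v at hspec ⊢
  cases v with
  | zero =>
    rw [pow_zero]
    exact one_dvd _
  | succ m => exact pow_succ_dvd_bhatNumerator ha' hA hA1 hc hcpw ⟨_, by rw [hspec, mul_comm]⟩

theorem BhatK_mem_range (ha : NotNonposInt p a) (ha' : IsDworkPrime p a a')
    (hA : IsHGCoeff p s a A) (hA1 : IsHGCoeff p s a' A1) (hc : (p : Wp p) ∣ c - 1)
    (hcpw : IsCpow p c cpw) (k : ℕ) :
    BhatK p s a a' A A1 cpw k ∈ (iotaK p).range := by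
  obtain ⟨w, hw⟩ := iota_natCast_add_dvd_bhatNumerator ha ha' hA hA1 hc hcpw k
  have hne : iotaK p (iota p (k + a)) ≠ 0 := by
    rw [map_ne_zero_iff _ (iotaK_injective p),
      map_ne_zero_iff _ (iota_injective p), add_comm]
    exact ha k
  exact ⟨w, by rw [BhatK_eq, hw, map_mul, inv_mul_cancel_left₀ hne]⟩

end Bhat

theorem statement0_general (p : ℕ) [Fact p.Prime] (s : ℕ)
    (a a' : ℤ_[p]) (ha : NotNonposInt p a) (ha' : IsDworkPrime p a a')
    (A A1 : ℕ → ℤ_[p]) (hA : IsHGCoeff p s a A) (hA1 : IsHGCoeff p s a' A1)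
    (u c : Wp p) (hc : c = 1 + (p : Wp p) * u)
    (cpw : ℤ_[p] → Wp p) (hcpw : IsCpow p c cpw) :
    (∀ k : ℕ, BhatK p s a a' A A1 cpw k ∈ (iotaK p).range) ∧
    (∀ m : ℕ, PowerSeries.coeff (R := Kp p) m
        (PowerSeries.mk (BhatK p s a a' A A1 cpw)) ∈ (iotaK p).range) ∧
    (∀ m : ℕ, PowerSeries.coeff (R := Kp p) m
        (PowerSeries.mk (BhatK p s a a' A A1 cpw) *
          (PowerSeries.mk (fun k => iotaK p (iota p (A k))))⁻¹) ∈ (iotaK p).range) := by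
  have hB : ∀ k, BhatK p s a a' A A1 cpw k ∈ (iotaK p).range :=
    BhatK_mem_range ha ha' hA hA1 ⟨u, by rw [hc, add_sub_cancel_left]⟩ hcpw
  have hG : ∀ m, PowerSeries.coeff m (PowerSeries.mk (BhatK p s a a' A A1 cpw)) ∈
      (iotaK p).range := fun m => by
    rw [PowerSeries.coeff_mk]
    exact hB m
  refine ⟨hB, hG, PowerSeries.coeff_mul_inv_mem _ hG (fun m => ?_) ?_⟩
  · rw [PowerSeries.coeff_mk]
    exact ⟨_, rfl⟩
  · rw [PowerSeries.constantCoeff_mk, hA.apply_zero, map_one, map_one]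

/-- `B_k ∈ W` for all `k`; consequently `Ĝ^{(σ)}_{a,…,a}(t) ∈ W[[t]]`
and `ℱ̂^{(σ)}_{a,…,a}(t) = Ĝ^{(σ)}_{a,…,a}(t)/F_{a,…,a}(t) ∈ W[[t]]`. -/
theorem statement0 (p : ℕ) [Fact p.Prime] (s : ℕ) (hs : 1 ≤ s)
    (a a' : ℤ_[p]) (ha : NotNonposInt p a) (ha' : IsDworkPrime p a a')
    (A A1 : ℕ → ℤ_[p]) (hA : IsHGCoeff p s a A) (hA1 : IsHGCoeff p s a' A1)
    (u c : Wp p) (hc : c = 1 + (p : Wp p) * u)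
    (cpw : ℤ_[p] → Wp p) (hcpw : IsCpow p c cpw) :
    (∀ k : ℕ, BhatK p s a a' A A1 cpw k ∈ (iotaK p).range) ∧
    (∀ m : ℕ, PowerSeries.coeff (R := Kp p) m
        (PowerSeries.mk (BhatK p s a a' A A1 cpw)) ∈ (iotaK p).range) ∧
    (∀ m : ℕ, PowerSeries.coeff (R := Kp p) m
        (PowerSeries.mk (BhatK p s a a' A A1 cpw) *
          (PowerSeries.mk (fun k => iotaK p (iota p (A k))))⁻¹) ∈ (iotaK p).range) :=
  statement0_general p s a a' ha ha' A A1 hA hA1 u c hc cpw hcpw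

end HGP
end

section
/- Let p be a prime, s ∈ ℤ_{≥1}, a ∈ ℤ_p, and let k ∈ ℤ_{≥0} and n ∈ ℤ_{≥1} be such that a + k ≡ 0 mod p^nℤ_p. Then k ≡ l mod p and A_k ≡ (−1)^{se}·A^{(1)}_{(k−l)/p} mod p^nℤ_p. -/
open scoped Classical

namespace HGP

variable {p : ℕ} [hp : Fact p.Prime]

private lemma poch_prod (a : ℤ_[p]) (k : ℕ) :
    (ascPochhammer ℤ_[p] k).eval a = ∏ j ∈ Finset.range k, (a + (j : ℤ_[p])) := by
  induction k with
  | zero => simp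
  | succ k ih => rw [ascPochhammer_succ_eval, Finset.prod_range_succ, ih]

private lemma dvd_int_iff (n : ℕ) (z : ℤ) :
    ((p : ℤ_[p]) ^ n ∣ (z : ℤ_[p])) ↔ ((p : ℤ) ^ n ∣ z) := by
  have := PadicInt.pow_p_dvd_int_iff (p := p) n z
  rwa [show ((p : ℤ) ^ n) = ((p ^ n : ℕ) : ℤ) by push_cast; ring] at this ⊢

private lemma nat_mod_iff {M : ℕ} (j l : ℕ) (hl : l < M) :
    ((M : ℤ) ∣ (j : ℤ) - (l : ℤ)) ↔ j % M = l := by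
  rw [← Nat.modEq_iff_dvd]
  unfold Nat.ModEq
  rw [Nat.mod_eq_of_lt hl]
  exact eq_comm

private lemma dvd_shift_iff {a : ℤ_[p]} {l : ℕ} (hl : l < p)
    (hal : (p : ℤ_[p]) ∣ a + (l : ℤ_[p])) (j : ℕ) :
    (p : ℤ_[p]) ∣ a + (j : ℤ_[p]) ↔ j % p = l := by
  have e : a + (j : ℤ_[p]) = (a + (l : ℤ_[p])) + (((j : ℤ) - (l : ℤ) : ℤ) : ℤ_[p]) := by
    push_cast; ring
  rw [e, dvd_add_right hal]
  have h2 := dvd_int_iff (p := p) 1 ((j : ℤ) - (l : ℤ))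
  rw [pow_one, pow_one] at h2
  rw [h2, nat_mod_iff j l hl]

private lemma filter_eq_image (a : ℤ_[p]) (l : ℕ) (hl : l < p) (k m : ℕ)
    (hdiv : ∀ j : ℕ, (p : ℤ_[p]) ∣ a + (j : ℤ_[p]) ↔ j % p = l)
    (hcount : ∀ i : ℕ, l + p * i < k ↔ i < m) :
    (Finset.range k).filter (fun j : ℕ => (p : ℤ_[p]) ∣ a + (j : ℤ_[p]))
      = (Finset.range m).image (fun i => l + p * i) := by
  ext j
  simp only [Finset.mem_filter, Finset.mem_range, Finset.mem_image]
  constructor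
  · rintro ⟨hjk, hdvd⟩
    have hm2 : j % p = l := (hdiv j).mp hdvd
    have hj : l + p * (j / p) = j := by
      rw [← hm2]; exact Nat.mod_add_div j p
    exact ⟨j / p, (hcount _).mp (by rwa [hj]), hj⟩
  · rintro ⟨i, him, rfl⟩
    refine ⟨(hcount i).mpr him, (hdiv _).mpr ?_⟩
    rw [Nat.add_mul_mod_self_left, Nat.mod_eq_of_lt hl]

private lemma prod_split (a b : ℤ_[p]) (l : ℕ) (hl : l < p)
    (hb : (p : ℤ_[p]) * b = a + (l : ℤ_[p])) (k m : ℕ)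
    (hdiv : ∀ j : ℕ, (p : ℤ_[p]) ∣ a + (j : ℤ_[p]) ↔ j % p = l)
    (hcount : ∀ i : ℕ, l + p * i < k ↔ i < m) :
    ∏ j ∈ Finset.range k, (a + (j : ℤ_[p])) =
      (p : ℤ_[p]) ^ m * (∏ i ∈ Finset.range m, (b + (i : ℤ_[p]))) *
        ∏ j ∈ (Finset.range k).filter (fun j : ℕ => ¬ (p : ℤ_[p]) ∣ (a + (j : ℤ_[p]))),
          (a + (j : ℤ_[p])) := by
  classical
  have hppos : 0 < p := (Fact.out : p.Prime).pos
  have hinj : ∀ x ∈ Finset.range m, ∀ y ∈ Finset.range m,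
      l + p * x = l + p * y → x = y := by
    intro x _ y _ h
    have h2 : p * x = p * y := by omega
    exact Nat.eq_of_mul_eq_mul_left hppos h2
  rw [← Finset.prod_filter_mul_prod_filter_not (Finset.range k)
      (fun j : ℕ => (p : ℤ_[p]) ∣ a + (j : ℤ_[p])), filter_eq_image a l hl k m hdiv hcount,
    Finset.prod_image hinj]
  congr 1
  have hterm : ∀ i ∈ Finset.range m,
      (a + ((l + p * i : ℕ) : ℤ_[p])) = (p : ℤ_[p]) * (b + (i : ℤ_[p])) := by
    intro i _
    push_cast
    linear_combination -hb
  rw [Finset.prod_congr rfl hterm, Finset.prod_mul_distrib, Finset.prod_const, Finset.card_range]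

set_option maxHeartbeats 2000000 in
set_option synthInstance.maxHeartbeats 1000000 in
/-- if `a + k ≡ 0 mod p^n` then `k ≡ l mod p` and
`A_k ≡ (−1)^{se}·A^{(1)}_{(k−l)/p} mod p^n ℤ_p`. -/
theorem statement1 (p : ℕ) [Fact p.Prime] (s : ℕ) (hs : 1 ≤ s)
    (a a' : ℤ_[p]) (ha' : IsDworkPrime p a a')
    (A A1 : ℕ → ℤ_[p]) (hA : IsHGCoeff p s a A) (hA1 : IsHGCoeff p s a' A1)
    (k n : ℕ) (hn : 1 ≤ n)
    (hk : a + (k : ℤ_[p]) ∈ Ideal.span {(p : ℤ_[p]) ^ n}) :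
    k % p = dl p a ∧
      A k - (-1 : ℤ_[p]) ^ (s * de p a) * A1 ((k - dl p a) / p)
        ∈ Ideal.span {(p : ℤ_[p]) ^ n} := by
  classical
  have hppos : 0 < p := (Fact.out : p.Prime).pos
  set l := dl p a with hldef
  have hlp : l < p := by
    rw [hldef]
    have h := PadicInt.appr_lt (-a) 1
    simpa [dl, pow_one] using h
  have hal : (p : ℤ_[p]) ∣ a + (l : ℤ_[p]) := by
    have h1 := PadicInt.appr_spec 1 (-a)
    rw [Ideal.mem_span_singleton, pow_one] at h1
    have h2 : a + (l : ℤ_[p]) = -(-a - (((-a).appr 1 : ℕ) : ℤ_[p])) := by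
      rw [hldef]; simp only [dl]; ring
    rw [h2]; exact dvd_neg.mpr h1
  have hdivA : ∀ j : ℕ, (p : ℤ_[p]) ∣ a + (j : ℤ_[p]) ↔ j % p = l :=
    fun j => dvd_shift_iff hlp hal j
  have hkspan : (p : ℤ_[p]) ^ n ∣ a + (k : ℤ_[p]) := Ideal.mem_span_singleton.mp hk
  have hpak : (p : ℤ_[p]) ∣ a + (k : ℤ_[p]) :=
    dvd_trans (dvd_pow_self (p : ℤ_[p]) (by omega : n ≠ 0)) hkspan
  have hklm : k % p = l := (hdivA k).mp hpak
  refine ⟨hklm, ?_⟩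
  set m := k / p with hmdef
  have hkeq : p * m + l = k := by
    rw [hmdef, ← hklm]; exact Nat.div_add_mod k p
  have hmlek : m ≤ k := by
    have h1 : m ≤ p * m := Nat.le_mul_of_pos_left m hppos
    omega
  have hmsub : (k - l) / p = m := by
    have h1 : k - l = p * m := by omega
    rw [h1, Nat.mul_div_cancel_left m hppos]
  rw [hmsub]
  -- counting lemmas
  have hcountA : ∀ i : ℕ, l + p * i < k ↔ i < m := by
    intro i
    constructor
    · intro h
      by_contra h'
      push_neg at h'
      have h2 : p * m ≤ p * i := Nat.mul_le_mul_left p h'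
      omega
    · intro h
      have h2 : p * (i + 1) ≤ p * m := Nat.mul_le_mul_left p h
      have h3 : p * (i + 1) = p * i + p := by ring
      omega
  have hcountF : ∀ i : ℕ, (p - 1) + p * i < k ↔ i < m := by
    intro i
    constructor
    · intro h
      by_contra h'
      push_neg at h'
      have h2 : p * m ≤ p * i := Nat.mul_le_mul_left p h'
      omega
    · intro h
      have h2 : p * (i + 1) ≤ p * m := Nat.mul_le_mul_left p h
      have h3 : p * (i + 1) = p * i + p := by ring
      omega
  have hba : (p : ℤ_[p]) * a' = a + (l : ℤ_[p]) := ha'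
  have hone : ((1 : ℤ_[p])) + ((p - 1 : ℕ) : ℤ_[p]) = (p : ℤ_[p]) := by
    have h1 : ((p - 1 : ℕ) : ℤ_[p]) = (p : ℤ_[p]) - 1 := by
      rw [Nat.cast_sub (by omega : 1 ≤ p)]; push_cast; ring
    rw [h1]; ring
  have hdivF : ∀ j : ℕ, (p : ℤ_[p]) ∣ (1 : ℤ_[p]) + (j : ℤ_[p]) ↔ j % p = p - 1 := by
    intro j
    exact dvd_shift_iff (by omega) (by rw [hone]) j
  -- sets and products
  set SA := (Finset.range k).filter (fun j : ℕ => ¬ (p : ℤ_[p]) ∣ (a + (j : ℤ_[p]))) with hSA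
  set SF := (Finset.range k).filter
      (fun j : ℕ => ¬ (p : ℤ_[p]) ∣ ((1 : ℤ_[p]) + (j : ℤ_[p]))) with hSF
  set N := ∏ j ∈ SA, (a + (j : ℤ_[p])) with hN
  set D := ∏ j ∈ SF, ((1 : ℤ_[p]) + (j : ℤ_[p])) with hD
  set Q := ∏ i ∈ Finset.range m, (a' + (i : ℤ_[p])) with hQ
  have hEqA : (ascPochhammer ℤ_[p] k).eval a = (p : ℤ_[p]) ^ m * Q * N := by
    rw [poch_prod, hN, hQ, hSA]
    exact prod_split a a' l hlp hba k m hdivA hcountA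
  have hfactprod : ∀ t : ℕ,
      ((t.factorial : ℕ) : ℤ_[p]) = ∏ j ∈ Finset.range t, ((1 : ℤ_[p]) + (j : ℤ_[p])) := by
    intro t
    rw [← Finset.prod_range_add_one_eq_factorial t]
    push_cast
    exact Finset.prod_congr rfl (fun j _ => by ring)
  have hEqF : ((k.factorial : ℕ) : ℤ_[p])
      = (p : ℤ_[p]) ^ m * ((m.factorial : ℕ) : ℤ_[p]) * D := by
    rw [hfactprod k, hfactprod m, hD, hSF]
    exact prod_split 1 1 (p - 1) (by omega)
      (by rw [mul_one]; exact hone.symm) k m hdivF hcountF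
  -- the key exact identity
  have hpne : (p : ℤ_[p]) ≠ 0 := Nat.cast_ne_zero.mpr (by omega)
  have hfacne : ((m.factorial : ℕ) : ℤ_[p]) ≠ 0 :=
    Nat.cast_ne_zero.mpr (Nat.factorial_ne_zero m)
  have key2 : D ^ s * A k = A1 m * N ^ s := by
    have h0 := hA k
    rw [hEqF, hEqA] at h0
    simp only [mul_pow] at h0
    have h2 := hA1 m
    rw [poch_prod, ← hQ] at h2
    have h1 : ((p : ℤ_[p]) ^ m) ^ s * (((m.factorial : ℕ) : ℤ_[p]) ^ s * (D ^ s * A k))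
        = ((p : ℤ_[p]) ^ m) ^ s * (((m.factorial : ℕ) : ℤ_[p]) ^ s * (A1 m * N ^ s)) := by
      linear_combination h0 - ((p : ℤ_[p]) ^ m) ^ s * N ^ s * h2
    have h3 := mul_left_cancel₀ (pow_ne_zero s (pow_ne_zero m hpne)) h1
    exact mul_left_cancel₀ (pow_ne_zero s hfacne) h3
  -- pass to the quotient
  set I := Ideal.span {(p : ℤ_[p]) ^ n} with hI
  have hmemSA : ∀ j : ℕ, j ∈ SA ↔ (j < k ∧ ¬ (p : ℤ_[p]) ∣ (a + (j : ℤ_[p]))) := by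
    intro j; rw [hSA]; simp [Finset.mem_filter, Finset.mem_range]
  have hmemSF : ∀ j : ℕ, j ∈ SF ↔ (j < k ∧ ¬ (p : ℤ_[p]) ∣ ((1 : ℤ_[p]) + (j : ℤ_[p]))) := by
    intro j; rw [hSF]; simp [Finset.mem_filter, Finset.mem_range]
  have hiff : ∀ j : ℕ, j < k →
      ((p : ℤ_[p]) ∣ (a + (j : ℤ_[p])) ↔ (p : ℤ_[p]) ∣ (((k - j : ℕ) : ℤ_[p]))) := by
    intro j hjk
    constructor
    · intro h
      have h2 := dvd_sub hpak h
      rwa [show a + (k : ℤ_[p]) - (a + (j : ℤ_[p])) = ((k - j : ℕ) : ℤ_[p]) from by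
        rw [Nat.cast_sub hjk.le]; ring] at h2
    · intro h
      have h2 := dvd_sub hpak h
      rwa [show a + (k : ℤ_[p]) - ((k - j : ℕ) : ℤ_[p]) = a + (j : ℤ_[p]) from by
        rw [Nat.cast_sub hjk.le]; ring] at h2
  have hcast : ∀ j : ℕ, j < k →
      ((k - j : ℕ) : ℤ_[p]) = 1 + ((k - 1 - j : ℕ) : ℤ_[p]) := by
    intro j hjk
    have h1 : k - j = (k - 1 - j) + 1 := by omega
    rw [h1]; push_cast; ring
  have hcA : SA.card + m = k := by
    have hinj2 : Set.InjOn (fun i => l + p * i) ↑(Finset.range m) := by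
      intro x _ y _ h
      dsimp only at h
      exact Nat.eq_of_mul_eq_mul_left hppos (by omega)
    have h3 : SA = Finset.range k \
        (Finset.range k).filter (fun j : ℕ => (p : ℤ_[p]) ∣ (a + (j : ℤ_[p]))) := by
      rw [hSA, Finset.filter_not]
    rw [h3, Finset.card_sdiff_of_subset (Finset.filter_subset _ _),
      filter_eq_image a l hlp k m hdivA hcountA, Finset.card_image_of_injOn hinj2,
      Finset.card_range, Finset.card_range]
    have h4 : ((Finset.range k).filter
        (fun j : ℕ => (p : ℤ_[p]) ∣ (a + (j : ℤ_[p])))).card ≤ k := by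
      calc ((Finset.range k).filter _).card ≤ (Finset.range k).card :=
            Finset.card_filter_le _ _
        _ = k := Finset.card_range k
    rw [filter_eq_image a l hlp k m hdivA hcountA, Finset.card_image_of_injOn hinj2,
      Finset.card_range] at h4
    omega
  have hNmod : Ideal.Quotient.mk I N
      = (Ideal.Quotient.mk I (-1 : ℤ_[p])) ^ SA.card * Ideal.Quotient.mk I D := by
    have hstep2 : ∀ j ∈ SA, Ideal.Quotient.mk I (a + (j : ℤ_[p]))
        = Ideal.Quotient.mk I (-1 : ℤ_[p]) * Ideal.Quotient.mk I (((k - j : ℕ) : ℤ_[p])) := by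
      intro j hj
      have hjk : j < k := ((hmemSA j).mp hj).1
      rw [← map_mul]
      refine Ideal.Quotient.eq.mpr ?_
      rw [show a + (j : ℤ_[p]) - ((-1 : ℤ_[p]) * ((k - j : ℕ) : ℤ_[p])) = a + (k : ℤ_[p]) from by
        rw [Nat.cast_sub hjk.le]; ring]
      exact hk
    calc Ideal.Quotient.mk I N = ∏ j ∈ SA, Ideal.Quotient.mk I (a + (j : ℤ_[p])) := by
          rw [hN]; exact map_prod _ _ _
      _ = ∏ j ∈ SA, (Ideal.Quotient.mk I (-1 : ℤ_[p])
            * Ideal.Quotient.mk I (((k - j : ℕ) : ℤ_[p]))) :=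
          Finset.prod_congr rfl hstep2
      _ = (Ideal.Quotient.mk I (-1 : ℤ_[p])) ^ SA.card
            * ∏ j ∈ SA, Ideal.Quotient.mk I (((k - j : ℕ) : ℤ_[p])) := by
          rw [Finset.prod_mul_distrib, Finset.prod_const]
      _ = (Ideal.Quotient.mk I (-1 : ℤ_[p])) ^ SA.card * Ideal.Quotient.mk I D := by
          congr 1
          rw [hD, map_prod]
          refine Finset.prod_nbij' (fun j => k - 1 - j) (fun j => k - 1 - j) ?_ ?_ ?_ ?_ ?_
          · intro j hj
            obtain ⟨hjk, hnd⟩ := (hmemSA j).mp hj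
            refine (hmemSF _).mpr ⟨by omega, ?_⟩
            intro hcon
            rw [← hcast j hjk] at hcon
            exact hnd ((hiff j hjk).mpr hcon)
          · intro j' hj'
            obtain ⟨hjk, hnd⟩ := (hmemSF j').mp hj'
            refine (hmemSA _).mpr ⟨by omega, ?_⟩
            intro hcon
            have h5 : k - (k - 1 - j') = j' + 1 := by omega
            have h6 := (hiff _ (by omega : k - 1 - j' < k)).mp hcon
            rw [h5] at h6
            apply hnd
            rwa [show ((j' + 1 : ℕ) : ℤ_[p]) = 1 + (j' : ℤ_[p]) from by push_cast; ring] at h6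
          · intro j hj
            have hjk : j < k := ((hmemSA j).mp hj).1
            omega
          · intro j' hj'
            have hjk : j' < k := ((hmemSF j').mp hj').1
            omega
          · intro j hj
            have hjk : j < k := ((hmemSA j).mp hj).1
            exact congrArg (Ideal.Quotient.mk I) (hcast j hjk)
  have hDunit : IsUnit D := by
    rw [hD]
    refine Finset.prod_induction _ IsUnit (fun u v hu hv => hu.mul hv) isUnit_one ?_
    intro j hj
    have hnd : ¬ (p : ℤ_[p]) ∣ ((1 : ℤ_[p]) + (j : ℤ_[p])) := ((hmemSF j).mp hj).2
    rw [PadicInt.isUnit_iff]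
    have hle : ‖(1 : ℤ_[p]) + (j : ℤ_[p])‖ ≤ 1 := PadicInt.norm_le_one _
    have hlt : ¬ ‖(1 : ℤ_[p]) + (j : ℤ_[p])‖ < 1 := fun hcon =>
      hnd (PadicInt.norm_lt_one_iff_dvd _ |>.mp hcon)
    exact le_antisymm hle (not_lt.mp hlt)
  have hq : (Ideal.Quotient.mk I D) ^ s * Ideal.Quotient.mk I (A k)
      = Ideal.Quotient.mk I (A1 m) * (Ideal.Quotient.mk I N) ^ s := by
    have h0 := congrArg (Ideal.Quotient.mk I) key2
    rw [map_mul, map_mul, map_pow, map_pow] at h0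
    exact h0
  rw [hNmod] at hq
  have hq2 : (Ideal.Quotient.mk I D) ^ s * Ideal.Quotient.mk I (A k)
      = (Ideal.Quotient.mk I D) ^ s * (Ideal.Quotient.mk I (A1 m)
        * ((Ideal.Quotient.mk I (-1 : ℤ_[p])) ^ SA.card) ^ s) := by
    rw [mul_pow] at hq
    rw [hq]
    ring
  have hfin : Ideal.Quotient.mk I (A k)
      = Ideal.Quotient.mk I (A1 m) * ((Ideal.Quotient.mk I (-1 : ℤ_[p])) ^ SA.card) ^ s :=
    (((hDunit.map (Ideal.Quotient.mk I)).pow s).mul_left_cancel hq2)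
  -- the sign
  have hsgn : (Ideal.Quotient.mk I (-1 : ℤ_[p])) ^ SA.card
      = (Ideal.Quotient.mk I (-1 : ℤ_[p])) ^ (de p a) := by
    by_cases hp2 : p = 2
    · by_cases hn2 : 2 ≤ n
      · have hl4 : dl' p a < p ^ 2 := by
          have h := PadicInt.appr_lt (-a) 2
          simp only [dl', hp2, if_pos]
          simpa [hp2] using h
        have hal' : a + ((dl' p a : ℕ) : ℤ_[p]) ∈ Ideal.span {(p : ℤ_[p]) ^ 2} := by
          have h1 := PadicInt.appr_spec 2 (-a)
          have h2 : a + ((dl' p a : ℕ) : ℤ_[p]) = -(-a - (((-a).appr 2 : ℕ) : ℤ_[p])) := by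
            simp only [dl']
            rw [if_pos hp2]
            ring
          rw [h2]
          exact neg_mem h1
        have hak4 : a + (k : ℤ_[p]) ∈ Ideal.span {(p : ℤ_[p]) ^ 2} := by
          apply Ideal.span_singleton_le_span_singleton.mpr (pow_dvd_pow (p : ℤ_[p]) hn2)
          rw [← hI]; exact hk
        have hdvd4 : ((p : ℤ) ^ 2) ∣ (k : ℤ) - (dl' p a : ℤ) := by
          rw [← dvd_int_iff]
          have h3 : ((((k : ℤ) - (dl' p a : ℤ)) : ℤ) : ℤ_[p])
              = (a + (k : ℤ_[p])) - (a + ((dl' p a : ℕ) : ℤ_[p])) := by push_cast; ring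
          rw [h3]
          exact Ideal.mem_span_singleton.mp (sub_mem hak4 hal')
        have hk4 : k % p ^ 2 = dl' p a := by
          rw [← nat_mod_iff _ _ hl4]
          exact_mod_cast hdvd4
        have hpar : SA.card % 2 = (de p a) % 2 := by
          have hde : de p a = dl' p a - dl' p a / p := rfl
          rw [hde]
          subst hp2
          have h22 : (2 : ℕ) ^ 2 = 4 := rfl
          rw [h22] at hk4 hl4
          omega
        rw [show (Ideal.Quotient.mk I (-1 : ℤ_[p])) ^ SA.card
            = (Ideal.Quotient.mk I (-1 : ℤ_[p])) ^ (SA.card % 2) from by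
          rw [← map_pow, ← map_pow, neg_one_pow_eq_pow_mod_two]]
        rw [show (Ideal.Quotient.mk I (-1 : ℤ_[p])) ^ (de p a)
            = (Ideal.Quotient.mk I (-1 : ℤ_[p])) ^ (de p a % 2) from by
          rw [← map_pow, ← map_pow, neg_one_pow_eq_pow_mod_two]]
        rw [hpar]
      · have hn1 : n = 1 := by omega
        have hmone : Ideal.Quotient.mk I (-1 : ℤ_[p]) = 1 := by
          have hpc : ((p : ℕ) : ℤ_[p]) = ((2 : ℕ) : ℤ_[p]) :=
            congrArg (fun t : ℕ => ((t : ℕ) : ℤ_[p])) hp2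
          have hmem : ((-1 : ℤ_[p]) - 1) ∈ I := by
            rw [hI, Ideal.mem_span_singleton, hn1, pow_one, hpc]
            rw [show ((2 : ℕ) : ℤ_[p]) = (2 : ℤ_[p]) from by push_cast; ring]
            rw [show ((-1 : ℤ_[p]) - 1) = -(2 : ℤ_[p]) from by ring]
            exact dvd_neg.mpr dvd_rfl
          have h2 : Ideal.Quotient.mk I (-1 : ℤ_[p]) = Ideal.Quotient.mk I 1 :=
            Ideal.Quotient.eq.mpr hmem
          rw [h2, map_one]
        rw [hmone, one_pow, one_pow]
    · have hpodd : Odd p := (Fact.out : p.Prime).odd_of_ne_two hp2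
      have he : de p a = l := by
        have h1 : dl' p a = l := by
          rw [hldef]; simp only [dl', dl, if_neg hp2]
        rw [de, h1, Nat.div_eq_of_lt hlp]
        omega
      rw [he]
      have h4 : (Ideal.Quotient.mk I (-1 : ℤ_[p])) ^ SA.card * (Ideal.Quotient.mk I (-1 : ℤ_[p])) ^ m
          = (Ideal.Quotient.mk I (-1 : ℤ_[p])) ^ l * (Ideal.Quotient.mk I (-1 : ℤ_[p])) ^ m := by
        rw [← pow_add, ← pow_add, hcA]
        conv_lhs => rw [← hkeq]
        rw [pow_add, pow_mul, ← map_pow, hpodd.neg_one_pow]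
        ring
      exact ((isUnit_one.neg.map (Ideal.Quotient.mk I)).pow m).mul_right_cancel h4
  refine Ideal.Quotient.eq.mp ?_
  rw [map_mul, map_pow, hfin, hsgn]
  rw [← pow_mul, Nat.mul_comm (de p a) s]
  ring

end HGP
end

section
/- Let p be a prime, a ∈ ℤ_p, and let k ∈ ℤ_{≥0} and n ∈ ℤ_{≥1} be such that a + k ≡ 0 mod p^nℤ_p. Then {1}_k is a unit in ℤ_p and {a}_k/{1}_k ≡ (−1)^{k−⌊k/p⌋} mod p^nℤ_p. -/
open scoped Classical

namespace HGP

-- auxiliary lemmas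
private lemma int_dvd_iff (p : ℕ) [Fact p.Prime] (m : ℤ) :
    (p : ℤ_[p]) ∣ (m : ℤ_[p]) ↔ (p : ℤ) ∣ m := by
  rw [← PadicInt.norm_lt_one_iff_dvd, PadicInt.norm_int_lt_one_iff_dvd]

private lemma unit_of_not_dvd (p : ℕ) [Fact p.Prime] (x : ℤ_[p]) (hx : ¬ (p : ℤ_[p]) ∣ x) :
    IsUnit x := by
  rw [PadicInt.isUnit_iff]
  exact le_antisymm (PadicInt.norm_le_one x)
    (not_lt.mp ((PadicInt.norm_lt_one_iff_dvd x).not.mpr hx))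

private lemma curly_one (p : ℕ) [Fact p.Prime] (k : ℕ) :
    curly p 1 k = ∏ j ∈ Finset.range k, if p ∣ (j + 1) then (1 : ℤ_[p]) else ((j + 1 : ℕ) : ℤ_[p]) := by
  unfold curly
  refine Finset.prod_congr rfl fun j _ => ?_
  have h1 : (1 : ℤ_[p]) + (j : ℤ_[p]) = ((j + 1 : ℕ) : ℤ_[p]) := by push_cast; ring
  have h2 : (p : ℤ_[p]) ∣ ((1 : ℤ_[p]) + j) ↔ p ∣ (j + 1) := by
    rw [h1, show ((j + 1 : ℕ) : ℤ_[p]) = (((j + 1 : ℕ) : ℤ) : ℤ_[p]) by push_cast; ring,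
      int_dvd_iff, Int.natCast_dvd_natCast]
  by_cases hd : p ∣ (j + 1)
  · rw [if_pos (h2.mpr hd), if_pos hd]
  · rw [if_neg (fun hc => hd (h2.mp hc)), if_neg hd, h1]

private lemma key_prod (p : ℕ) [Fact p.Prime] (k : ℕ) :
    (∏ j ∈ Finset.range k, if p ∣ (k - j) then (1 : ℤ_[p]) else -((k - j : ℕ) : ℤ_[p]))
      = (-1 : ℤ_[p]) ^ (k - k / p) * curly p 1 k := by
  rw [curly_one]
  rw [← Finset.prod_range_reflect (fun j => if p ∣ (k - j) then (1 : ℤ_[p]) else -((k - j : ℕ) : ℤ_[p])) k]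
  have step : ∀ j ∈ Finset.range k,
      (if p ∣ (k - (k - 1 - j)) then (1 : ℤ_[p]) else -((k - (k - 1 - j) : ℕ) : ℤ_[p]))
        = (if p ∣ (j + 1) then (1 : ℤ_[p]) else -1) *
          (if p ∣ (j + 1) then (1 : ℤ_[p]) else ((j + 1 : ℕ) : ℤ_[p])) := by
    intro j hj
    have hjk : j < k := Finset.mem_range.mp hj
    have h : k - (k - 1 - j) = j + 1 := by omega
    rw [h]
    split_ifs <;> ring
  rw [Finset.prod_congr rfl step, Finset.prod_mul_distrib]
  congr 1
  rw [Finset.prod_ite, Finset.prod_const_one, Finset.prod_const, one_mul]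
  congr 1
  have h1 : ((Finset.range k).filter (fun j => p ∣ (j + 1))).card = k / p :=
    Nat.card_multiples k p
  have h2 := Finset.card_filter_add_card_filter_not (s := Finset.range k)
    (p := fun j => p ∣ (j + 1))
  simp only [Finset.card_range] at h2
  omega

/-- if `a + k ≡ 0 mod p^n` then `{1}_k` is a unit in `ℤ_p` and
`{a}_k/{1}_k ≡ (−1)^{k−⌊k/p⌋} mod p^n ℤ_p`. -/
theorem statement2 (p : ℕ) [Fact p.Prime] (a : ℤ_[p]) (k n : ℕ) (hn : 1 ≤ n)
    (hk : a + (k : ℤ_[p]) ∈ Ideal.span {(p : ℤ_[p]) ^ n}) :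
    IsUnit (curly p 1 k) ∧
      curly p a k - (-1 : ℤ_[p]) ^ (k - k / p) * curly p 1 k
        ∈ Ideal.span {(p : ℤ_[p]) ^ n} := by
  have hpk : (p : ℤ_[p]) ∣ (a + k) :=
    dvd_trans (dvd_pow_self _ (by omega : n ≠ 0)) (Ideal.mem_span_singleton.mp hk)
  constructor
  · rw [curly_one]
    refine Finset.prod_induction _ _ (fun x y => IsUnit.mul) isUnit_one ?_
    intro j _
    split_ifs with h
    · exact isUnit_one
    · refine unit_of_not_dvd p _ ?_
      rw [show ((j + 1 : ℕ) : ℤ_[p]) = (((j + 1 : ℕ) : ℤ) : ℤ_[p]) by push_cast; ring,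
        int_dvd_iff, Int.natCast_dvd_natCast]
      exact h
  · set I : Ideal ℤ_[p] := Ideal.span {(p : ℤ_[p]) ^ n} with hI
    rw [← Ideal.Quotient.eq]
    have hmap : Ideal.Quotient.mk I (curly p a k)
        = Ideal.Quotient.mk I (∏ j ∈ Finset.range k,
            if p ∣ (k - j) then (1 : ℤ_[p]) else -((k - j : ℕ) : ℤ_[p])) := by
      unfold curly
      rw [map_prod, map_prod]
      refine Finset.prod_congr rfl fun j hj => ?_
      have hjk : j < k := Finset.mem_range.mp hj
      have hcast : a + (j : ℤ_[p]) - (-((k - j : ℕ) : ℤ_[p])) = a + k := by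
        push_cast [Nat.cast_sub hjk.le]; ring
      have hcond : (p : ℤ_[p]) ∣ (a + (j : ℤ_[p])) ↔ p ∣ (k - j) := by
        have : a + (j : ℤ_[p]) = (a + k) + (-((k - j : ℕ) : ℤ_[p])) := by
          rw [← hcast]; ring
        rw [this]
        constructor
        · intro h
          have := (dvd_sub h hpk)
          simp only [add_sub_cancel_left] at this
          have := dvd_neg.mp this
          rwa [show ((k - j : ℕ) : ℤ_[p]) = (((k - j : ℕ) : ℤ) : ℤ_[p]) by push_cast; ring,
            int_dvd_iff, Int.natCast_dvd_natCast] at this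
        · intro h
          refine dvd_add hpk (dvd_neg.mpr ?_)
          rwa [show ((k - j : ℕ) : ℤ_[p]) = (((k - j : ℕ) : ℤ) : ℤ_[p]) by push_cast; ring,
            int_dvd_iff, Int.natCast_dvd_natCast]
      simp only [hcond]
      split_ifs with h
      · rfl
      · rw [Ideal.Quotient.eq]
        rw [hcast]
        exact hk
    rw [hmap, key_prod]


end HGP
end

section
/- Let p be a prime and a ∈ ℤ_p ∖ ℤ_{≤0}; take c = 1. For s ∈ ℤ_{≥1} write A_k(s) := ((a)_k/k!)^s, A^{(1)}_m(s) := ((a′)_m/m!)^s, and B_k(s) := (k+a)^{−1}(A_k(s) − (−1)^{se} A^{(1)}_{(k−l)/p}(s)), with the convention A^{(1)}_{(k−l)/p}(s) := 0 unless k ≥ l and k ≡ l mod p. If the function k ↦ B_k(1)/A_k(1) on ℤ_{≥0} is Lipschitz, then for every s ≥ 1 the function k ↦ B_k(s)/A_k(s) is Lipschitz. -/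
open scoped Classical

namespace HGP

section AuxLip
variable {p : ℕ} [Fact p.Prime]

lemma lip_constW (w : Wp p) : LipschitzSeq p (fun _ : ℕ => iotaK p w) := by
  refine ⟨fun n => ⟨w, rfl⟩, fun n n' m _ => ⟨0, by simp⟩⟩

lemma lip_one : LipschitzSeq p (fun _ : ℕ => (1 : Kp p)) := by
  simpa using lip_constW (1 : Wp p)

lemma lip_mul {f g : ℕ → Kp p} (hf : LipschitzSeq p f) (hg : LipschitzSeq p g) :
    LipschitzSeq p (fun n => f n * g n) := by
  obtain ⟨hf1, hf2⟩ := hf; obtain ⟨hg1, hg2⟩ := hg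
  refine ⟨fun n => ?_, fun n n' m hm => ?_⟩
  · obtain ⟨u, hu⟩ := hf1 n; obtain ⟨v, hv⟩ := hg1 n
    exact ⟨u * v, by rw [map_mul, hu, hv]⟩
  · obtain ⟨u, hu⟩ := hf1 n
    obtain ⟨v, hv⟩ := hg1 n'
    obtain ⟨w1, hw1⟩ := hf2 n n' m hm
    obtain ⟨w2, hw2⟩ := hg2 n n' m hm
    refine ⟨u * w2 + w1 * v, ?_⟩
    have h : f n * g n - f n' * g n' = f n * (g n - g n') + (f n - f n') * g n' := by ring
    rw [h, hw1, hw2, ← hu, ← hv, map_add, map_mul, map_mul, hu, hv]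
    ring

lemma lip_add {f g : ℕ → Kp p} (hf : LipschitzSeq p f) (hg : LipschitzSeq p g) :
    LipschitzSeq p (fun n => f n + g n) := by
  obtain ⟨hf1, hf2⟩ := hf; obtain ⟨hg1, hg2⟩ := hg
  refine ⟨fun n => ?_, fun n n' m hm => ?_⟩
  · obtain ⟨u, hu⟩ := hf1 n; obtain ⟨v, hv⟩ := hg1 n
    exact ⟨u + v, by rw [map_add, hu, hv]⟩
  · obtain ⟨w1, hw1⟩ := hf2 n n' m hm
    obtain ⟨w2, hw2⟩ := hg2 n n' m hm
    refine ⟨w1 + w2, ?_⟩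
    rw [map_add]
    rw [show f n + g n - (f n' + g n') = (f n - f n') + (g n - g n') by ring, hw1, hw2]
    ring

lemma lip_sub {f g : ℕ → Kp p} (hf : LipschitzSeq p f) (hg : LipschitzSeq p g) :
    LipschitzSeq p (fun n => f n - g n) := by
  obtain ⟨hf1, hf2⟩ := hf; obtain ⟨hg1, hg2⟩ := hg
  refine ⟨fun n => ?_, fun n n' m hm => ?_⟩
  · obtain ⟨u, hu⟩ := hf1 n; obtain ⟨v, hv⟩ := hg1 n
    exact ⟨u - v, by rw [map_sub, hu, hv]⟩
  · obtain ⟨w1, hw1⟩ := hf2 n n' m hm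
    obtain ⟨w2, hw2⟩ := hg2 n n' m hm
    refine ⟨w1 - w2, ?_⟩
    rw [map_sub]
    rw [show f n - g n - (f n' - g n') = (f n - f n') - (g n - g n') by ring, hw1, hw2]
    ring

lemma lip_cast : LipschitzSeq p (fun n : ℕ => (n : Kp p)) := by
  refine ⟨fun n => ⟨(n : Wp p), by simp⟩, fun n n' m hm => ?_⟩
  obtain ⟨d, hd⟩ := hm
  refine ⟨(d : Wp p), ?_⟩
  have : ((n : ℤ) : Kp p) - ((n' : ℤ) : Kp p) = (((p : ℤ) ^ m * d : ℤ) : Kp p) := by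
    rw [← hd]; push_cast; ring
  rw [map_intCast]
  push_cast at this ⊢
  exact this

lemma lip_pow {f : ℕ → Kp p} (hf : LipschitzSeq p f) (j : ℕ) :
    LipschitzSeq p (fun n => f n ^ j) := by
  induction j with
  | zero => simpa using lip_one (p := p)
  | succ i ih =>
      have := lip_mul ih hf
      simpa [pow_succ] using this

lemma lip_sum {ι : Type*} (S : Finset ι) (f : ι → ℕ → Kp p)
    (h : ∀ j ∈ S, LipschitzSeq p (f j)) :
    LipschitzSeq p (fun n => ∑ j ∈ S, f j n) := by
  classical
  induction S using Finset.induction_on with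
  | empty => simpa using lip_constW (0 : Wp p)
  | @insert a S' hj ih =>
      have h1 := h a (Finset.mem_insert_self a S')
      have h2 := ih (fun j hjS => h j (Finset.mem_insert_of_mem hjS))
      have := lip_add h1 h2
      simpa [Finset.sum_insert hj] using this


end AuxLip

set_option maxHeartbeats 1000000 in
set_option synthInstance.maxHeartbeats 400000 in
/-- (`c = 1`) if `k ↦ B_k(1)/A_k(1)` is Lipschitz (the case `s = 1`), then
for every `s ≥ 1` the function `k ↦ B_k(s)/A_k(s)` is Lipschitz. -/
theorem statement9 (p : ℕ) [Fact p.Prime]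
    (a a' : ℤ_[p]) (ha : NotNonposInt p a) (ha' : IsDworkPrime p a a')
    (AF A1F : ℕ → ℕ → ℤ_[p])
    (hAF : ∀ s : ℕ, IsHGCoeff p s a (AF s)) (hA1F : ∀ s : ℕ, IsHGCoeff p s a' (A1F s))
    (h1 : LipschitzSeq p
      (fun k => BhatK p 1 a a' (AF 1) (A1F 1) (fun _ => 1) k / iotaK p (iota p (AF 1 k)))) :
    ∀ s : ℕ, 1 ≤ s →
      LipschitzSeq p
        (fun k => BhatK p s a a' (AF s) (A1F s) (fun _ => 1) k /
          iotaK p (iota p (AF s k))) := by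
  intro s hs
  have hKinj : Function.Injective (iotaK p) := IsFractionRing.injective _ _
  have hiinj : Function.Injective (iota p) := by
    have h1' : Function.Injective (WittVector.map (p := p) (algebraMap (ZMod p) (Fbar p))) :=
      WittVector.map_injective _ (algebraMap (ZMod p) (Fbar p)).injective
    have h2' : Function.Injective (WittVector.equiv p).symm.toRingHom :=
      (WittVector.equiv p).symm.injective
    simpa [iota, RingHom.coe_comp] using h1'.comp h2'
  -- factorial nonzero
  have hfac : ∀ k : ℕ, ((k.factorial : ℤ_[p])) ≠ 0 := fun k =>
    Nat.cast_ne_zero.mpr k.factorial_ne_zero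
  -- AF 1 k ≠ 0
  have hpoch : ∀ k : ℕ, (ascPochhammer ℤ_[p] k).eval a ≠ 0 := by
    intro k
    induction k with
    | zero => simp
    | succ n ih =>
        rw [ascPochhammer_succ_eval]
        exact mul_ne_zero ih (ha n)
  have hAF1ne : ∀ k : ℕ, AF 1 k ≠ 0 := by
    intro k hk0
    have h := hAF 1 k
    rw [hk0, mul_zero, pow_one] at h
    exact hpoch k h.symm
  -- AF s k = (AF 1 k) ^ s
  have hAs : ∀ k : ℕ, AF s k = (AF 1 k) ^ s := by
    intro k
    have h1' := hAF 1 k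
    have h2' := hAF s k
    rw [pow_one, pow_one] at h1'
    have hh : ((k.factorial : ℤ_[p])) ^ s * AF s k =
        ((k.factorial : ℤ_[p])) ^ s * (AF 1 k) ^ s := by
      rw [h2', ← h1', mul_pow]
    exact mul_left_cancel₀ (pow_ne_zero _ (hfac k)) hh
  have hA1s : ∀ m : ℕ, A1F s m = (A1F 1 m) ^ s := by
    intro m
    have h1' := hA1F 1 m
    have h2' := hA1F s m
    rw [pow_one, pow_one] at h1'
    have hh : ((m.factorial : ℤ_[p])) ^ s * A1F s m =
        ((m.factorial : ℤ_[p])) ^ s * (A1F 1 m) ^ s := by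
      rw [h2', ← h1', mul_pow]
    exact mul_left_cancel₀ (pow_ne_zero _ (hfac m)) hh
  -- the denominators
  have hD : ∀ k : ℕ, ((k : Kp p) + iotaK p (iota p a)) ≠ 0 := by
    intro k hk
    have hk' : iotaK p (iota p ((k : ℤ_[p]) + a)) = 0 := by
      rw [map_add, map_add, map_natCast, map_natCast]
      exact hk
    have := hKinj (by rw [hk', map_zero] : iotaK p (iota p ((k : ℤ_[p]) + a)) = iotaK p 0)
    have := hiinj (by rw [this ] ; rw [map_zero] : iota p ((k : ℤ_[p]) + a) = iota p 0)
    exact ha k (by rw [add_comm] at this; simpa using this)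
  have hA0 : ∀ k : ℕ, iotaK p (iota p (AF 1 k)) ≠ 0 := by
    intro k hk
    have := hKinj (by rw [hk, map_zero] : iotaK p (iota p (AF 1 k)) = iotaK p 0)
    have := hiinj (by rw [this, map_zero] : iota p (AF 1 k) = iota p 0)
    exact hAF1ne k this
  set F1 : ℕ → Kp p :=
    fun k => BhatK p 1 a a' (AF 1) (A1F 1) (fun _ => 1) k / iotaK p (iota p (AF 1 k)) with hF1def
  set x : ℕ → Kp p := fun k => 1 - ((k : Kp p) + iotaK p (iota p a)) * F1 k with hxdef
  -- key pointwise identity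
  have key : ∀ k : ℕ,
      BhatK p s a a' (AF s) (A1F s) (fun _ => 1) k / iotaK p (iota p (AF s k)) =
        F1 k * ∑ j ∈ Finset.range s, x k ^ j := by
    intro k
    set D : Kp p := (k : Kp p) + iotaK p (iota p a) with hDdef
    set A : Kp p := iotaK p (iota p (AF 1 k)) with hAdef
    set V : Kp p := if dl p a ≤ k ∧ p ∣ (k - dl p a) then
        (-1 : Kp p) ^ (de p a) * iotaK p (iota p (A1F 1 ((k - dl p a) / p))) else 0 with hVdef
    have hDne : D ≠ 0 := hD k
    have hAne : A ≠ 0 := hA0 k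
    have hBgen : ∀ t : ℕ, 1 ≤ t →
        BhatK p t a a' (AF t) (A1F t) (fun _ => 1) k = D⁻¹ * (A ^ t - V ^ t) := by
      intro t ht
      have hAst : AF t k = (AF 1 k) ^ t := by
        have h1' := hAF 1 k
        have h2' := hAF t k
        rw [pow_one, pow_one] at h1'
        have hh : ((k.factorial : ℤ_[p])) ^ t * AF t k =
            ((k.factorial : ℤ_[p])) ^ t * (AF 1 k) ^ t := by
          rw [h2', ← h1', mul_pow]
        exact mul_left_cancel₀ (pow_ne_zero _ (hfac k)) hh
      have hA1st : A1F t ((k - dl p a) / p) = (A1F 1 ((k - dl p a) / p)) ^ t := by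
        have h1' := hA1F 1 ((k - dl p a) / p)
        have h2' := hA1F t ((k - dl p a) / p)
        rw [pow_one, pow_one] at h1'
        have hh : (((((k - dl p a) / p)).factorial : ℤ_[p])) ^ t * A1F t ((k - dl p a) / p) =
            (((((k - dl p a) / p)).factorial : ℤ_[p])) ^ t * (A1F 1 ((k - dl p a) / p)) ^ t := by
          rw [h2', ← h1', mul_pow]
        exact mul_left_cancel₀ (pow_ne_zero _ (hfac _)) hh
      unfold BhatK
      rw [hAst, map_pow, map_pow]
      rw [← hDdef, ← hAdef]
      congr 2
      by_cases hcond : dl p a ≤ k ∧ p ∣ (k - dl p a)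
      · rw [if_pos hcond, hA1st, hVdef, if_pos hcond]
        rw [mul_pow, ← pow_mul, Nat.mul_comm (de p a) t, map_pow, map_pow]
        simp
      · rw [if_neg hcond, hVdef, if_neg hcond, zero_pow (by omega : t ≠ 0)]
    have hBs := hBgen s hs
    have hB1 := hBgen 1 le_rfl
    rw [pow_one, pow_one] at hB1
    have hF1k : F1 k = D⁻¹ * (A - V) / A := by
      show BhatK p 1 a a' (AF 1) (A1F 1) (fun _ => 1) k / A = D⁻¹ * (A - V) / A
      rw [hB1]
    have hxk : x k = V / A := by
      rw [hxdef]
      simp only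
      rw [hF1k, ← hDdef,
        show D * (D⁻¹ * (A - V) / A) = (D * D⁻¹) * ((A - V) / A) by ring,
        mul_inv_cancel₀ hDne, one_mul, eq_div_iff hAne, sub_mul, one_mul,
        div_mul_cancel₀ _ hAne]
      ring
    have hgeom : (1 - V / A) * ∑ j ∈ Finset.range s, (V / A) ^ j = 1 - (V / A) ^ s := by
      have hg := geom_sum_mul (V / A) s
      linear_combination -hg
    rw [hBs, hAs k, map_pow, map_pow, ← hAdef, hF1k, hxk]
    have hL : (A ^ s - V ^ s) / A ^ s = 1 - (V / A) ^ s := by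
      rw [sub_div, div_self (pow_ne_zero s hAne), div_pow]
    rw [mul_div_assoc, hL, ← hgeom, mul_div_assoc, sub_div, div_self hAne]
    ring
  have hfun : (fun k => BhatK p s a a' (AF s) (A1F s) (fun _ => 1) k /
      iotaK p (iota p (AF s k))) = fun k => F1 k * ∑ j ∈ Finset.range s, x k ^ j :=
    funext key
  rw [hfun]
  have hF1lip : LipschitzSeq p F1 := h1
  have hxlip : LipschitzSeq p x := by
    have hcast : LipschitzSeq p (fun k : ℕ => (k : Kp p) + iotaK p (iota p a)) :=
      lip_add lip_cast (lip_constW _)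
    exact lip_sub lip_one (lip_mul hcast hF1lip)
  exact lip_mul hF1lip (lip_sum (Finset.range s) _ (fun j _ => lip_pow hxlip j))

end HGP
end

section
/- Let p be a prime, s ∈ ℤ_{≥1}, a ∈ ℤ_p ∖ ℤ_{≤0}, and let (B_n)_{n≥0} be elements of W such that the function n ↦ B_n/A_n is Lipschitz. For m ∈ ℤ_{≥0} and n ∈ ℤ_{≥1} put S_m := Σ_{i+j=m, i,j≥0} (A_{i+p^n} B_j − A_i B_{j+p^n}). Then S_m ≡ Σ_{i+j=m} (A_{i+p^n} A_j − A_i A_{j+p^n}) · (B_j/A_j) mod p^n W. -/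
open scoped Classical

namespace HGP

/-- `S_m ≡ Σ_{i+j=m} (A_{i+p^n} A_j − A_i A_{j+p^n}) · (B_j/A_j) mod p^n W`. -/
theorem statement13 (p : ℕ) [Fact p.Prime] (s : ℕ) (hs : 1 ≤ s)
    (a : ℤ_[p]) (ha : NotNonposInt p a)
    (A : ℕ → ℤ_[p]) (hA : IsHGCoeff p s a A)
    (B : ℕ → Wp p)
    (hLip : LipschitzSeq p (fun k => iotaK p (B k) / iotaK p (iota p (A k)))) :
    ∀ (m n : ℕ), 1 ≤ n →
      ∃ w : Wp p,
        iotaK p (∑ i ∈ Finset.range (m + 1),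
            (iota p (A (i + p ^ n)) * B (m - i) - iota p (A i) * B (m - i + p ^ n))) -
          (∑ i ∈ Finset.range (m + 1),
            iotaK p (iota p (A (i + p ^ n)) * iota p (A (m - i)) -
                iota p (A i) * iota p (A (m - i + p ^ n))) *
              (iotaK p (B (m - i)) / iotaK p (iota p (A (m - i))))) =
        (p : Kp p) ^ n * iotaK p w := by
  obtain ⟨hLip1, hLip2⟩ := hLip
  intro m n hn
  -- nonvanishing of the A's in K
  have hpoch : ∀ k : ℕ, (ascPochhammer ℤ_[p] k).eval a ≠ 0 := by
    intro k
    induction k with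
    | zero => simp
    | succ k ih =>
      rw [ascPochhammer_succ_eval]
      exact mul_ne_zero ih (ha k)
  have hAZ : ∀ k : ℕ, A k ≠ 0 := by
    intro k hk
    exact pow_ne_zero s (hpoch k) (by rw [← hA k, hk, mul_zero])
  have hiota : Function.Injective (iota p) := by
    have hmap : Function.Injective ⇑(WittVector.map (p := p) (algebraMap (ZMod p) (Fbar p))) :=
      WittVector.map_injective (p := p) (algebraMap (ZMod p) (Fbar p))
        (algebraMap (ZMod p) (Fbar p)).injective
    intro x y hxy
    exact (WittVector.equiv p).symm.injective (hmap hxy)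
  have hiotaK : Function.Injective (iotaK p) := IsFractionRing.injective (Wp p) (Kp p)
  have hAne : ∀ k : ℕ, iotaK p (iota p (A k)) ≠ 0 := by
    intro k hk
    exact hAZ k (hiota (hiotaK (by simpa using hk)))
  choose w hw using fun i : ℕ =>
    hLip2 (m - i + p ^ n) (m - i) n ⟨1, by push_cast; ring⟩
  refine ⟨∑ i ∈ Finset.range (m + 1),
    -(iota p (A i) * iota p (A (m - i + p ^ n)) * w i), ?_⟩
  rw [map_sum, map_sum, ← Finset.sum_sub_distrib, Finset.mul_sum]
  refine Finset.sum_congr rfl fun i _ => ?_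
  have h1 := hAne (m - i)
  have h2 := hAne (m - i + p ^ n)
  have h3 := hw i
  simp only at h3
  simp only [map_sub, map_mul, map_neg]
  have e1 : iotaK p (iota p (A (m - i))) *
      (iotaK p (B (m - i)) / iotaK p (iota p (A (m - i)))) = iotaK p (B (m - i)) := by
    field_simp
  have hu : iotaK p (iota p (A (m - i))) * (iotaK p (iota p (A (m - i))))⁻¹ = 1 :=
    mul_inv_cancel₀ h1
  have hv : iotaK p (iota p (A (m - i + p ^ n))) * (iotaK p (iota p (A (m - i + p ^ n))))⁻¹ = 1 :=
    mul_inv_cancel₀ h2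
  linear_combination (-(iotaK p (iota p (A i)) * iotaK p (iota p (A (m - i + p ^ n))))) * h3 +
    iotaK p (iota p (A (i + p ^ n))) * e1 +
    (-(2 * iotaK p (iota p (A (i + p ^ n))) * iotaK p (B (m - i)))) * hu +
    (iotaK p (iota p (A i)) * iotaK p (B (m - i + p ^ n))) * hv

end HGP
end
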